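/- Let S = ℚ[x, y, z] and let M ⊆ S^4 be the submodule of tuples (g_0, g_1, g_2, g_3) satisfying: (x + y − z) divides g_0 − g_1, (2x − y + z) divides g_0 − g_2, (x − 2y − z) divides g_0 − g_3, x divides g_1 − g_2, (x − y) divides g_2 − g_3, and y divides g_1 − g_3. Then there exists K such that for all k ≥ K, the ℚ-vector space of elements of M all of whose components are homogeneous of degree k has dimension exactly 2k² + 2; i.e., the Hilbert polynomial of M is 2k² + 2. -/

import Mathlib

open MvPolynomial

/-- The ring `S = ℚ[x, y, z]`. -/
abbrev S : Type := MvPolynomial (Fin 3) ℚ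

/-- The Billera–Rose submodule of `S^N` cut out by a list of conditions
`(ℓ, a, b)`, each requiring `ℓ ∣ g_a - g_b`. -/
noncomputable def splineBR {N : ℕ} (conds : List (S × Fin N × Fin N)) :
    Submodule S (Fin N → S) where
  carrier := {g | ∀ c ∈ conds, c.1 ∣ g c.2.1 - g c.2.2}
  add_mem' := by
    intro a b ha hb c hc
    simpa [sub_add_sub_comm] using dvd_add (ha c hc) (hb c hc)
  zero_mem' := by
    intro c hc
    simp
  smul_mem' := by
    intro r g hg c hc
    simpa [smul_eq_mul, mul_sub] using (hg c hc).mul_left r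

/-- The spline module `M = C^0(Σ) ⊆ S^4` of the cone `Σ` over the symmetric
triangle-in-triangle complex: tuples `(g_0, g_1, g_2, g_3)` with
`x+y-z ∣ g_0-g_1`, `2x-y+z ∣ g_0-g_2`, `x-2y-z ∣ g_0-g_3`, `x ∣ g_1-g_2`,
`x-y ∣ g_2-g_3`, `y ∣ g_1-g_3`. -/
noncomputable def M : Submodule S (Fin 4 → S) :=
  splineBR [(X 0 + X 1 - X 2, 0, 1), (2 * X 0 - X 1 + X 2, 0, 2),
    (X 0 - 2 * X 1 - X 2, 0, 3), (X 0, 1, 2), (X 0 - X 1, 2, 3), (X 1, 1, 3)]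

/-- The `ℚ`-vector space of elements of `M` all of whose components are homogeneous of
degree `k` (or zero). -/
noncomputable def MHomPart (k : ℕ) : Submodule ℚ (Fin 4 → S) :=
  (Submodule.restrictScalars ℚ M) ⊓
    Submodule.pi Set.univ (fun _ : Fin 4 => homogeneousSubmodule (Fin 3) ℚ k)

/-!
`M` is a free `S`-module on the rows of the upper triangular matrix `splineBasis`, whose entries
in row `i` are homogeneous of degree `i`. Membership of these rows in `M` is a direct check.
Conversely, for `g ∈ M` the conditions at the walls of the inner triangle give
`g₁ - g₀ = ℓ₁ p`, `g₂ - g₀ = ℓ₂ q`, `g₃ - g₀ = ℓ₃ r`, and the conditions at the three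
concurrent walls `x`, `y`, `x - y` then peel off the further factors
`x ∣ p + q`, `y ∣ p - r`, `x - y ∣ q + r`, each time because a prime linear form does not
divide the cofactor it is multiplied with. Since the basis is homogeneous, replacing the
coefficients of a degree-`k` spline by their homogeneous components of degree `k - i` identifies
the degree-`k` part of `M` with `⊕ᵢ S_{k-i}` once `k ≥ 3`, whose dimension is
`∑_{i=0}^{3} C(k - i + 2, 2) = 2k² + 2`.
-/

namespace MvPolynomial

variable {σ R : Type*} [CommSemiring R]

theorem isHomogeneous_ofNat_mul_X (n : ℕ) [n.AtLeastTwo] (i : σ) :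
    ((OfNat.ofNat n : MvPolynomial σ R) * X i).IsHomogeneous 1 := by
  rw [← map_ofNat C n]
  exact isHomogeneous_C_mul_X _ i

attribute [local instance] MvPolynomial.gradedAlgebra in
theorem homogeneousComponent_mul_of_isHomogeneous {p q : MvPolynomial σ R} {d k : ℕ}
    (hq : q.IsHomogeneous d) (hdk : d ≤ k) :
    homogeneousComponent k (p * q) = homogeneousComponent (k - d) p * q := by
  rw [← decomposition.decompose'_apply, ← decomposition.decompose'_apply]
  exact DirectSum.coe_decompose_mul_of_right_mem_of_le (homogeneousSubmodule σ R) hq hdk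

theorem finrank_homogeneousSubmodule {K : Type*} [Fintype σ] [Field K] (n : ℕ) :
    Module.finrank K (homogeneousSubmodule σ K n) = (Fintype.card σ + n - 1).choose n := by
  classical
  rw [homogeneousSubmodule_eq_finsupp_supported, ← restrictSupport,
    Module.finrank_eq_nat_card_basis (basisRestrictSupport K _), ← Nat.card_eq_fintype_card,
    ← Sym.natCard_sym_eq_choose]
  exact Nat.card_congr ((Sym.equivNatSum σ n).trans (Equiv.subtypeEquivRight fun _ => Iff.rfl)).symm

theorem not_dvd_of_eval_eq_zero (x : σ → R) {p q : MvPolynomial σ R} (hp : eval x p = 0)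
    (hq : eval x q ≠ 0) : ¬p ∣ q :=
  fun ⟨c, hc⟩ => hq (by rw [hc, map_mul, hp, zero_mul])

variable {κ : Type*}

noncomputable def homogeneousPart (N : Submodule (MvPolynomial σ R) (κ → MvPolynomial σ R))
    (k : ℕ) : Submodule R (κ → MvPolynomial σ R) :=
  N.restrictScalars R ⊓ Submodule.pi Set.univ fun _ => homogeneousSubmodule σ R k

variable {ι : Type*} [Fintype ι] (e : ι → κ → MvPolynomial σ R) (d : ι → ℕ) (k : ℕ)

/-- `k - d i` is truncated subtraction, so this is only meaningful when `d i ≤ k` for all `i`. -/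
noncomputable def gradedCombination :
    ((i : ι) → homogeneousSubmodule σ R (k - d i)) →ₗ[R] κ → MvPolynomial σ R :=
  (Fintype.linearCombination (MvPolynomial σ R) e).restrictScalars R ∘ₗ
    LinearMap.pi fun i => (homogeneousSubmodule σ R (k - d i)).subtype ∘ₗ LinearMap.proj i

theorem gradedCombination_apply (f : (i : ι) → homogeneousSubmodule σ R (k - d i)) :
    gradedCombination e d k f = ∑ i, (f i : MvPolynomial σ R) • e i := by
  simp [gradedCombination, Fintype.linearCombination_apply]

variable {e d k}

theorem gradedCombination_mem (he : ∀ i j, (e i j).IsHomogeneous (d i)) (hd : ∀ i, d i ≤ k)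
    (f : (i : ι) → homogeneousSubmodule σ R (k - d i)) :
    gradedCombination e d k f ∈ homogeneousPart (Submodule.span _ (Set.range e)) k := by
  rw [gradedCombination_apply]
  refine Submodule.mem_inf.2 ⟨Submodule.sum_mem _ fun i _ =>
    Submodule.smul_mem _ _ (Submodule.subset_span (Set.mem_range_self i)),
    Submodule.mem_pi.2 fun j _ => ?_⟩
  simp only [Finset.sum_apply, Pi.smul_apply, smul_eq_mul]
  refine Submodule.sum_mem _ fun i _ => ?_
  have := (f i).2.mul (he i j)
  rwa [Nat.sub_add_cancel (hd i)] at this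

theorem gradedCombination_injective (hli : LinearIndependent (MvPolynomial σ R) e) :
    Function.Injective (gradedCombination e d k) := by
  intro f g hfg
  rw [gradedCombination_apply, gradedCombination_apply] at hfg
  funext i
  exact Subtype.ext (congrFun (hli.fintypeLinearCombination_injective hfg) i)

theorem exists_gradedCombination_eq (he : ∀ i j, (e i j).IsHomogeneous (d i))
    (hd : ∀ i, d i ≤ k) {g : κ → MvPolynomial σ R}
    (hg : g ∈ homogeneousPart (Submodule.span _ (Set.range e)) k) :
    ∃ f, gradedCombination e d k f = g := by
  obtain ⟨hspan, hhom⟩ := hg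
  obtain ⟨c, rfl⟩ := (Submodule.mem_span_range_iff_exists_fun _).1 hspan
  refine ⟨fun i => ⟨_, homogeneousComponent_mem (k - d i) (c i)⟩, ?_⟩
  funext j
  have hj := homogeneousComponent_eq_self (Submodule.mem_pi.1 hhom j trivial)
  rw [gradedCombination_apply]
  simp only [Finset.sum_apply, Pi.smul_apply, smul_eq_mul] at hj ⊢
  rw [← hj, map_sum]
  exact Finset.sum_congr rfl fun i _ =>
    (homogeneousComponent_mul_of_isHomogeneous (he i j) (hd i)).symm

theorem finrank_homogeneousPart_span {K : Type*} [Finite σ] [Field K]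
    {e : ι → κ → MvPolynomial σ K} (he : ∀ i j, (e i j).IsHomogeneous (d i))
    (hd : ∀ i, d i ≤ k) (hli : LinearIndependent (MvPolynomial σ K) e) :
    Module.finrank K (homogeneousPart (Submodule.span _ (Set.range e)) k) =
      ∑ i, Module.finrank K (homogeneousSubmodule σ K (k - d i)) := by
  have (n : ℕ) : Module.Finite K (homogeneousSubmodule σ K n) :=
    Module.Finite.iff_fg.2 (homogeneousSubmodule_fg σ K n)
  rw [← Module.finrank_pi_fintype]
  refine (LinearEquiv.ofBijective ((gradedCombination e d k).codRestrict _
    (gradedCombination_mem he hd)) ⟨fun f g hfg => gradedCombination_injective hli ?_,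
      fun g => ?_⟩).finrank_eq.symm
  · exact congrArg Subtype.val hfg
  · obtain ⟨f, hf⟩ := exists_gradedCombination_eq he hd g.2
    exact ⟨f, Subtype.ext hf⟩

end MvPolynomial

theorem MvPolynomial.prime_X_zero_sub_X_succ {R : Type*} [CommRing R] [IsDomain R] {n : ℕ}
    (i : Fin n) : Prime (X 0 - X i.succ : MvPolynomial (Fin (n + 1)) R) := by
  rw [← MulEquiv.prime_iff (finSuccEquiv R n).toMulEquiv]
  convert Polynomial.prime_X_sub_C (X i : MvPolynomial (Fin n) R)
  simp [finSuccEquiv_X_zero, finSuccEquiv_X_succ]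

theorem Prime.dvd_of_dvd_mul_add {R : Type*} [CommRing R] {p u v w : R} (hp : Prime p)
    (hu : ¬p ∣ u) (h : p ∣ u * v + p * w) : p ∣ v :=
  (hp.dvd_or_dvd ((dvd_add_left (dvd_mul_right p w)).1 h)).resolve_left hu

local notation "ℓ₁" => (X 0 + X 1 - X 2 : S)
local notation "ℓ₂" => (2 * X 0 - X 1 + X 2 : S)
local notation "ℓ₃" => (X 0 - 2 * X 1 - X 2 : S)

noncomputable def splineBasis : Matrix (Fin 4) (Fin 4) S :=
  !![1, 1, 1, 1;
    0, ℓ₁, -ℓ₂, ℓ₃;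
    0, 0, X 0 * ℓ₂, -(X 1 * ℓ₃);
    0, 0, 0, X 1 * (X 0 - X 1) * ℓ₃]

theorem isHomogeneous_wallForms :
    IsHomogeneous ℓ₁ 1 ∧ IsHomogeneous ℓ₂ 1 ∧ IsHomogeneous ℓ₃ 1 := by
  have hX := isHomogeneous_X ℚ (σ := Fin 3)
  exact ⟨((hX 0).add (hX 1)).sub (hX 2), ((isHomogeneous_ofNat_mul_X 2 0).sub (hX 1)).add (hX 2),
    ((hX 0).sub (isHomogeneous_ofNat_mul_X 2 1)).sub (hX 2)⟩

theorem splineBasis_isHomogeneous (i j : Fin 4) : (splineBasis i j).IsHomogeneous i := by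
  have hX := isHomogeneous_X ℚ (σ := Fin 3)
  obtain ⟨h₁, h₂, h₃⟩ := isHomogeneous_wallForms
  fin_cases i <;> fin_cases j <;>
    simp only [splineBasis, Fin.reduceFinMk, Fin.isValue, Matrix.of_apply, Matrix.cons_val] <;>
    first
    | exact isHomogeneous_zero _ _ _
    | exact isHomogeneous_one _ _
    | exact h₁ | exact h₂.neg | exact h₃
    | exact (hX 0).mul h₂
    | exact ((hX 1).mul h₃).neg
    | exact ((hX 1).mul ((hX 0).sub (hX 1))).mul h₃

theorem splineBasis_isUpperTriangular : splineBasis.IsUpperTriangular := by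
  intro i j hij
  fin_cases i <;> fin_cases j <;> simp_all [splineBasis]

theorem linearIndependent_splineBasis : LinearIndependent S splineBasis := by
  refine Matrix.linearIndependent_rows_of_det_ne_zero fun h => ?_
  rw [Matrix.det_of_isUpperTriangular splineBasis_isUpperTriangular] at h
  simp only [Fin.prod_univ_four, splineBasis, Fin.isValue, Matrix.of_apply, Matrix.cons_val',
    Matrix.cons_val, Matrix.cons_val_fin_one] at h
  have := congrArg (eval ![1, 2, 5]) h
  simp only [map_mul, map_sub, map_add, map_one, eval_X, Matrix.cons_val] at this
  norm_num at this

theorem mem_M_iff {g : Fin 4 → S} : g ∈ M ↔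
    ℓ₁ ∣ g 0 - g 1 ∧ ℓ₂ ∣ g 0 - g 2 ∧ ℓ₃ ∣ g 0 - g 3 ∧
      X 0 ∣ g 1 - g 2 ∧ X 0 - X 1 ∣ g 2 - g 3 ∧ X 1 ∣ g 1 - g 3 := by
  simp [M, splineBR]

theorem splineBasis_mem (i : Fin 4) : splineBasis i ∈ M := by
  rw [mem_M_iff]
  fin_cases i <;> simp only [splineBasis, Fin.zero_eta, Fin.mk_one, Fin.reduceFinMk, Fin.isValue,
    Matrix.of_apply, Matrix.cons_val]
  · simp
  · exact ⟨⟨-1, by ring⟩, ⟨1, by ring⟩, ⟨-1, by ring⟩, ⟨3, by ring⟩, ⟨-3, by ring⟩, ⟨3, by ring⟩⟩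
  · exact ⟨⟨0, by ring⟩, ⟨-X 0, by ring⟩, ⟨X 1, by ring⟩, ⟨-ℓ₂, by ring⟩,
      ⟨2 * X 0 + 2 * X 1 + X 2, by ring⟩, ⟨ℓ₃, by ring⟩⟩
  · exact ⟨⟨0, by ring⟩, ⟨0, by ring⟩, ⟨-(X 1 * (X 0 - X 1)), by ring⟩, ⟨0, by ring⟩,
      ⟨-(X 1 * ℓ₃), by ring⟩, ⟨-((X 0 - X 1) * ℓ₃), by ring⟩⟩

theorem M_le_span_splineBasis : M ≤ Submodule.span S (Set.range splineBasis) := by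
  intro g hg
  obtain ⟨h01, h02, h03, h12, h23, h13⟩ := mem_M_iff.1 hg
  obtain ⟨p, hp⟩ := dvd_sub_comm.1 h01
  obtain ⟨q, hq⟩ := dvd_sub_comm.1 h02
  obtain ⟨r, hr⟩ := dvd_sub_comm.1 h03
  obtain ⟨a, ha⟩ : X 0 ∣ p + q := X_prime.dvd_of_dvd_mul_add (u := X 1 - X 2) (w := p - 2 * q)
    (not_dvd_of_eval_eq_zero ![0, 1, 0] (by simp) (by simp))
    (by convert h12 using 1; linear_combination hq - hp)
  obtain ⟨b, hb⟩ : X 1 ∣ p - r := X_prime.dvd_of_dvd_mul_add (u := X 0 - X 2) (w := p + 2 * r)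
    (not_dvd_of_eval_eq_zero ![1, 0, 0] (by simp) (by simp))
    (by convert h13 using 1; linear_combination hr - hp)
  have hqr : X 0 - X 1 ∣ q + r := (prime_X_zero_sub_X_succ 0).dvd_of_dvd_mul_add
    (u := X 0 + X 2) (w := q - 2 * r) (not_dvd_of_eval_eq_zero ![0, 0, 1] (by simp) (by simp))
    (by convert h23 using 1; linear_combination hr - hq)
  obtain ⟨c, hc⟩ : X 0 - X 1 ∣ a - b := (prime_X_zero_sub_X_succ 0).dvd_of_dvd_mul_add
    (u := X 0) (w := b) (not_dvd_of_eval_eq_zero ![1, 1, 0] (by simp) (by simp))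
    (by convert hqr using 1; linear_combination hb - ha)
  refine (Submodule.mem_span_range_iff_exists_fun S).2 ⟨![g 0, p, a, c], funext fun j => ?_⟩
  fin_cases j <;> simp only [splineBasis, Fin.zero_eta, Fin.mk_one, Fin.reduceFinMk, Fin.isValue,
    Finset.sum_apply, Pi.smul_apply, smul_eq_mul, Fin.sum_univ_four, Matrix.of_apply,
    Matrix.cons_val', Matrix.cons_val, Matrix.cons_val_fin_one]
  · ring
  · linear_combination -hp
  · linear_combination -hq - ℓ₂ * ha
  · linear_combination -hr + ℓ₃ * hb - X 1 * ℓ₃ * hc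

theorem span_splineBasis : Submodule.span S (Set.range splineBasis) = M :=
  le_antisymm (Submodule.span_le.2 (Set.range_subset_iff.2 splineBasis_mem)) M_le_span_splineBasis

theorem sum_choose_two_sub (k : ℕ) (hk : 3 ≤ k) :
    ∑ i : Fin 4, (k - i + 2).choose 2 = 2 * k ^ 2 + 2 := by
  obtain ⟨m, rfl⟩ := Nat.exists_eq_add_of_le' hk
  norm_num [Fin.sum_univ_four]
  qify
  simp only [Nat.cast_choose_two]
  push_cast
  ring

/-- **Theorem**: the Hilbert polynomial of `M = C^0(Σ)` is `2k² + 2`: for all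
sufficiently large `k`, the space of homogeneous degree-`k` splines on `Σ` has
dimension exactly `2k² + 2`. -/
theorem hilbert_polynomial_symmetric_fan :
    ∃ K : ℕ, ∀ k : ℕ, K ≤ k →
      Module.finrank ℚ (MHomPart k) = 2 * k ^ 2 + 2 := by
  refine ⟨3, fun k hk => ?_⟩
  have hd (i : Fin 4) : (i : ℕ) ≤ k := by omega
  change Module.finrank ℚ (homogeneousPart M k) = _
  rw [← span_splineBasis, finrank_homogeneousPart_span splineBasis_isHomogeneous hd
    linearIndependent_splineBasis, ← sum_choose_two_sub k hk]
  refine Finset.sum_congr rfl fun i _ => ?_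
  rw [finrank_homogeneousSubmodule, Fintype.card_fin, ← Nat.choose_symm_add]
  congr 1
  omega
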